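/- arXiv:2204.10792 — 6 statements merged into one kernel-verified Lean document; each statement's English description precedes it below -/
import Mathlib

section
/- Fix a fusion rule f and observers f_1,…,f_n. Suppose σ_f ∈ Σ satisfies σ_f ∉ Σ_io for every i and σ_f does not occur in any string of L. Let L' = (L \ K) ∪ { s ++ [σ_f] | s ∈ K }. Then (f_1,…,f_n) together with f solve the observation problem Obs(f, L, K, (Σ_io)) if and only if (f_1,…,f_n) together with f solve the diagnosis problem Dx(f, L', (Σ_io), σ_f, 0). (This is the reduction of f-observation problems to f-diagnosis problems, Theorem 2.) -/
open List

/-- Natural projection onto a subalphabet: keep only symbols in `A`. -/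
def natProj {α : Type*} (A : Set α) [DecidablePred (· ∈ A)] (s : List α) : List α :=
  s.filter (fun a => decide (a ∈ A))

/-- Observers `obs` together with fusion rule `f` solve the observation problem
`Obs(f, L, K, (Sio i))`. -/
def SolvesObs {α : Type*} {n : ℕ} {V : Fin n → Type*} (f : (∀ i, V i) → Bool)
    (obs : ∀ i, List α → V i) (L K : Set (List α))
    (Sio : Fin n → Set α) [∀ i, DecidablePred (· ∈ Sio i)] : Prop :=
  ∀ s ∈ L,
    (s ∈ K → f (fun i => obs i (natProj (Sio i) s)) = true) ∧
    (s ∈ L \ K → f (fun i => obs i (natProj (Sio i) s)) = false)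

/-- `s` is positive (contains the fault event `σf`) for at least `m` steps. -/
def PosSteps {α : Type*} (σf : α) (m : ℕ) (s : List α) : Prop :=
  ∃ π τ : List α, s = π ++ [σf] ++ τ ∧ m ≤ τ.length

/-- Observers `obs` together with fusion rule `f` solve the diagnosis problem
`Dx(f, L, (Sio i), σf, m)`. -/
def SolvesDx {α : Type*} {n : ℕ} {V : Fin n → Type*} (f : (∀ i, V i) → Bool)
    (obs : ∀ i, List α → V i) (L : Set (List α))
    (Sio : Fin n → Set α) [∀ i, DecidablePred (· ∈ Sio i)]
    (σf : α) (m : ℕ) : Prop :=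
  ∀ s ∈ L,
    (PosSteps σf m s → f (fun i => obs i (natProj (Sio i) s)) = true) ∧
    (σf ∉ s → f (fun i => obs i (natProj (Sio i) s)) = false)

/-- Controllers `con σ` together with fusion rules `fus σ`, for `σ ∈ Sc`, solve the
control problem `Con(L, K, (Sio i), Sc)`. -/
def SolvesCon {α : Type*} {n : ℕ} {V : Fin n → Type*} (fus : α → (∀ i, V i) → Bool)
    (con : α → ∀ i, List α → V i) (L K : Set (List α))
    (Sio : Fin n → Set α) [∀ i, DecidablePred (· ∈ Sio i)] (Sc : Set α) : Prop :=
  ∀ σ ∈ Sc, ∀ s ∈ K,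
    (s ++ [σ] ∈ K → fus σ (fun i => con σ i (natProj (Sio i) s)) = true) ∧
    (s ++ [σ] ∈ L \ K → fus σ (fun i => con σ i (natProj (Sio i) s)) = false)

/-- Prefix closure of a language. -/
def pr {α : Type*} (M : Set (List α)) : Set (List α) := {s | ∃ t ∈ M, s <+: t}

/-- `Mγ`: every string of `M` extended by the symbol `γ`. -/
def catSym {α : Type*} (M : Set (List α)) (γ : α) : Set (List α) :=
  {t | ∃ s ∈ M, t = s ++ [γ]}

/-!
Appending the unobservable fault `σf` to the strings of `K` leaves every projection, hence every
fused verdict, unchanged. Since `L` is fault-free, in `L' = (L \ K) ∪ K σf` the strings that are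
positive (for `0` steps) are exactly the extensions of strings of `K`, and the negative ones are
exactly those of `L \ K`; so the two specifications ask for the same verdicts on the same
projections.
-/

section Reduction

variable {α : Type*} {n : ℕ} {V : Fin n → Type*}

theorem natProj_append_singleton_of_not_mem {A : Set α} [DecidablePred (· ∈ A)] {a : α}
    (ha : a ∉ A) (s : List α) : natProj A (s ++ [a]) = natProj A s := by
  simp [natProj, List.filter_append, ha]

theorem posSteps_zero_iff {σf : α} {s : List α} : PosSteps σf 0 s ↔ σf ∈ s := by
  constructor
  · rintro ⟨π, τ, rfl, -⟩
    simp
  · intro h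
    obtain ⟨π, τ, rfl⟩ := List.append_of_mem h
    exact ⟨π, τ, by simp, Nat.zero_le _⟩

variable (f : (∀ i, V i) → Bool) (obs : ∀ i, List α → V i) {L K : Set (List α)}
  {Sio : Fin n → Set α} [∀ i, DecidablePred (· ∈ Sio i)] {σf : α}

theorem verdict_append_fault (hσf : ∀ i, σf ∉ Sio i) (s : List α) :
    f (fun i => obs i (natProj (Sio i) (s ++ [σf]))) = f (fun i => obs i (natProj (Sio i) s)) := by
  simp only [natProj_append_singleton_of_not_mem (hσf _)]

theorem SolvesObs.solvesDx_diff_union_catSym (hKL : K ⊆ L) (hσf : ∀ i, σf ∉ Sio i)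
    (hσfL : ∀ s ∈ L, σf ∉ s) (h : SolvesObs f obs L K Sio) :
    SolvesDx f obs ((L \ K) ∪ catSym K σf) Sio σf 0 := by
  rintro _ (⟨hsL, hsK⟩ | ⟨s, hsK, rfl⟩)
  · refine ⟨fun hpos => absurd (posSteps_zero_iff.mp hpos) (hσfL _ hsL), fun _ => ?_⟩
    exact (h _ hsL).2 ⟨hsL, hsK⟩
  · refine ⟨fun _ => ?_, fun hneg => (hneg (by simp)).elim⟩
    rw [verdict_append_fault f obs hσf]
    exact (h s (hKL hsK)).1 hsK

theorem SolvesDx.solvesObs_of_diff_union_catSym (hσf : ∀ i, σf ∉ Sio i)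
    (hσfL : ∀ s ∈ L, σf ∉ s) (h : SolvesDx f obs ((L \ K) ∪ catSym K σf) Sio σf 0) :
    SolvesObs f obs L K Sio := by
  refine fun s hsL => ⟨fun hsK => ?_, fun hsLK => (h s (Or.inl hsLK)).2 (hσfL s hsL)⟩
  have hpos : PosSteps σf 0 (s ++ [σf]) := posSteps_zero_iff.mpr (by simp)
  rw [← verdict_append_fault f obs hσf]
  exact (h _ (Or.inr ⟨s, hsK, rfl⟩)).1 hpos

end Reduction

/-- **Theorem 2 (f-Obs ≤ f-Dx).** With `L' = (L \ K) ∪ { s ++ [σf] | s ∈ K }`,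
the observers solve `Obs(f, L, K, (Sio i))` iff they solve `Dx(f, L', (Sio i), σf, 0)`. -/
theorem obs_to_dx {α : Type*} {n : ℕ} {V : Fin n → Type*}
    (f : (∀ i, V i) → Bool) (obs : ∀ i, List α → V i)
    (L K : Set (List α)) (hKL : K ⊆ L)
    (Sio : Fin n → Set α) [∀ i, DecidablePred (· ∈ Sio i)]
    (σf : α) (hσf : ∀ i, σf ∉ Sio i) (hσfL : ∀ s ∈ L, σf ∉ s) :
    SolvesObs f obs L K Sio ↔
      SolvesDx f obs ((L \ K) ∪ catSym K σf) Sio σf 0 :=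
  ⟨SolvesObs.solvesDx_diff_union_catSym f obs hKL hσf hσfL,
    SolvesDx.solvesObs_of_diff_union_catSym f obs hσf hσfL⟩
end

section
/- Let K ⊆ L be languages over Σ and Σ_c ⊆ Σ. For each σ ∈ Σ_c define L_σ = { s ∈ K | s ++ [σ] ∈ L } and K_σ = { s ∈ K | s ++ [σ] ∈ K }. Then a family of controllers (f_1^σ,…,f_n^σ) and fusion rules f^σ (σ ∈ Σ_c) solves the control problem Con(L, K, (Σ_io), Σ_c) if and only if for every σ ∈ Σ_c, the observers (f_1^σ,…,f_n^σ) together with the fusion rule f^σ solve the observation problem Obs(f^σ, L_σ, K_σ, (Σ_io)). (Reduction of control problems to observation problems, Theorem 5.) -/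
open List

theorem solvesObs_iff_of_subset {α : Type*} {n : ℕ} {V : Fin n → Type*}
    {f : (∀ i, V i) → Bool} {obs : ∀ i, List α → V i} {L K : Set (List α)}
    {Sio : Fin n → Set α} [∀ i, DecidablePred (· ∈ Sio i)] (hKL : K ⊆ L) :
    SolvesObs f obs L K Sio ↔
      (∀ s ∈ K, f (fun i => obs i (natProj (Sio i) s)) = true) ∧
      (∀ s ∈ L \ K, f (fun i => obs i (natProj (Sio i) s)) = false) := by
  refine ⟨fun h => ⟨fun s hs => (h s (hKL hs)).1 hs, fun s hs => (h s hs.1).2 hs⟩,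
    fun h s _ => ⟨h.1 s, h.2 s⟩⟩

theorem sep_diff_sep {β : Type*} (K : Set β) (p q : β → Prop) :
    {s ∈ K | p s} \ {s ∈ K | q s} = {s ∈ K | p s ∧ ¬q s} := by
  ext s
  simp only [Set.mem_sdiff, Set.mem_ofPred_eq]
  tauto

/-- **Theorem 5 (Con ≤ Obs).** A family of controllers and fusion rules solves
`Con(L, K, (Sio i), Sc)` iff for every `σ ∈ Sc` the corresponding observers and
fusion rule solve `Obs(fus σ, Lσ, Kσ, (Sio i))`, where `Lσ = { s ∈ K | s ++ [σ] ∈ L }`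
and `Kσ = { s ∈ K | s ++ [σ] ∈ K }`. -/
theorem con_to_obs {α : Type*} {n : ℕ} {V : Fin n → Type*}
    (L K : Set (List α)) (hKL : K ⊆ L)
    (Sio : Fin n → Set α) [∀ i, DecidablePred (· ∈ Sio i)]
    (Sc : Set α)
    (fus : α → (∀ i, V i) → Bool) (con : α → ∀ i, List α → V i) :
    SolvesCon fus con L K Sio Sc ↔
      ∀ σ ∈ Sc,
        SolvesObs (fus σ) (con σ)
          {s ∈ K | s ++ [σ] ∈ L} {s ∈ K | s ++ [σ] ∈ K} Sio := by
  refine forall₂_congr fun σ _ => ?_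
  have hKσ : {s ∈ K | s ++ [σ] ∈ K} ⊆ {s ∈ K | s ++ [σ] ∈ L} :=
    fun s hs => ⟨hs.1, hKL hs.2⟩
  rw [solvesObs_iff_of_subset hKσ, sep_diff_sep]
  simp only [Set.mem_sdiff, Set.mem_ofPred_eq, and_imp, forall_and]
end

section
/- Let K ⊆ L be languages over Σ and let γ ∈ Σ be a symbol not occurring in any string of L. Define L' = pr(Lγ) and K' = pr(Kγ ∪ L). Then for every symbol σ ∈ Σ with σ ≠ γ and every string s ∈ K', if s ++ [σ] ∈ L' then s ++ [σ] ∈ K'. (That is, K' is controllable with respect to L' when γ is the only controllable event.) -/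
open List

theorem List.IsPrefix.of_concat_of_ne {α : Type*} {s t : List α} {σ γ : α}
    (h : s ++ [σ] <+: t ++ [γ]) (hσ : σ ≠ γ) : s ++ [σ] <+: t := by
  refine (List.prefix_concat_iff.mp h).resolve_left fun heq => hσ ?_
  simpa using (List.append_inj' heq rfl).2

theorem pr_mono {α : Type*} {M N : Set (List α)} (h : M ⊆ N) : pr M ⊆ pr N :=
  fun _ ⟨t, ht, hst⟩ => ⟨t, h ht, hst⟩

theorem concat_mem_pr_of_concat_mem_pr_catSym {α : Type*} {M : Set (List α)} {s : List α}
    {σ γ : α} (h : s ++ [σ] ∈ pr (catSym M γ)) (hσ : σ ≠ γ) : s ++ [σ] ∈ pr M := by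
  obtain ⟨_, ⟨t, htM, rfl⟩, hpre⟩ := h
  exact ⟨t, htM, hpre.of_concat_of_ne hσ⟩

theorem controllable_general {α : Type*} (L K : Set (List α))
    (γ : α) :
    ∀ σ : α, σ ≠ γ → ∀ s ∈ pr (catSym K γ ∪ L),
      s ++ [σ] ∈ pr (catSym L γ) → s ++ [σ] ∈ pr (catSym K γ ∪ L) :=
  fun _ hσ _ _ hsσ =>
    pr_mono Set.subset_union_right (concat_mem_pr_of_concat_mem_pr_catSym hsσ hσ)

/-- Controllability of `K' = pr(Kγ ∪ L)` with respect to `L' = pr(Lγ)` when `γ` is the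
only controllable event: for any `σ ≠ γ`, if `s ∈ K'` and `s ++ [σ] ∈ L'` then
`s ++ [σ] ∈ K'`. -/
theorem controllable {α : Type*} (L K : Set (List α)) (hKL : K ⊆ L)
    (γ : α) (hγ : ∀ s ∈ L, γ ∉ s) :
    ∀ σ : α, σ ≠ γ → ∀ s ∈ pr (catSym K γ ∪ L),
      s ++ [σ] ∈ pr (catSym L γ) → s ++ [σ] ∈ pr (catSym K γ ∪ L) :=
  controllable_general L K γ
end

section
/- Let K ⊆ L be languages over Σ and let γ ∈ Σ be a symbol not occurring in any string of L. Define L' = pr(Lγ) and K' = pr(Kγ ∪ L). Then { s ∈ K' | s ++ [γ] ∈ L' } = L. -/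
open List

theorem subset_pr {α : Type*} (M : Set (List α)) : M ⊆ pr M :=
  fun s hs => ⟨s, hs, prefix_refl s⟩

theorem eq_of_append_singleton_prefix_append_singleton {α : Type*} {s u : List α} {γ : α}
    (hγ : γ ∉ u) (h : s ++ [γ] <+: u ++ [γ]) : s = u := by
  have hlen : u.length ≤ s.length := by
    by_contra! hlt
    have hpre : s ++ [γ] <+: u :=
      prefix_of_prefix_length_le h (prefix_append u [γ]) (by simpa using hlt)
    exact hγ (hpre.subset (mem_append_right s (mem_singleton_self γ)))
  have heq : s ++ [γ] = u ++ [γ] :=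
    h.eq_of_length (by simpa using le_antisymm (by simpa using h.length_le) hlen)
  exact append_cancel_right heq

theorem append_singleton_mem_pr_catSym_iff {α : Type*} {L : Set (List α)} {γ : α}
    (hγ : ∀ s ∈ L, γ ∉ s) (s : List α) : s ++ [γ] ∈ pr (catSym L γ) ↔ s ∈ L := by
  constructor
  · rintro ⟨_, ⟨u, hu, rfl⟩, hpre⟩
    rwa [eq_of_append_singleton_prefix_append_singleton (hγ u hu) hpre]
  · exact fun hs => subset_pr _ ⟨s, hs, rfl⟩

theorem Lgamma_eq_general {α : Type*} (L K : Set (List α))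
    (γ : α) (hγ : ∀ s ∈ L, γ ∉ s) :
    {s ∈ pr (catSym K γ ∪ L) | s ++ [γ] ∈ pr (catSym L γ)} = L := by
  ext s
  rw [Set.mem_ofPred_eq, append_singleton_mem_pr_catSym_iff hγ]
  exact ⟨And.right, fun hs => ⟨pr_mono Set.subset_union_right (subset_pr L hs), hs⟩⟩

/-- With `L' = pr(Lγ)` and `K' = pr(Kγ ∪ L)`, we have `L'_γ = { s ∈ K' | sγ ∈ L' } = L`. -/
theorem Lgamma_eq {α : Type*} (L K : Set (List α)) (hKL : K ⊆ L)
    (γ : α) (hγ : ∀ s ∈ L, γ ∉ s) :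
    {s ∈ pr (catSym K γ ∪ L) | s ++ [γ] ∈ pr (catSym L γ)} = L :=
  Lgamma_eq_general L K γ hγ
end

section
/- Let K ⊆ L be languages over Σ and let γ ∈ Σ be a symbol not occurring in any string of L, with no assumption on whether γ ∈ Σ_io. Define L' = pr(Lγ) and K' = pr(Kγ ∪ L), and let Σ_c = {γ}. Then observers f_1,…,f_n together with a fusion rule f solve the observation problem Obs(f, L, K, (Σ_io)) if and only if, taken as the controllers and fusion rule for the single controllable event γ (f_i^γ := f_i, f^γ := f), they solve the control problem Con(L', K', (Σ_io), {γ}). -/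
open List

theorem concat_prefix_concat_eq {α : Type*} {s t : List α} {γ : α}
    (h : s ++ [γ] <+: t ++ [γ]) (hγ : γ ∉ t) : s = t := by
  rcases h with ⟨r, hr⟩
  rcases r.eq_nil_or_concat with rfl | ⟨r', a, rfl⟩
  · simpa using hr
  · exfalso
    have heq : (s ++ [γ] ++ r') ++ [a] = t ++ [γ] := by
      simpa [List.append_assoc] using hr
    obtain ⟨h1, -⟩ := List.append_inj' heq rfl
    exact hγ (by rw [← h1]; simp)

theorem concat_mem_pr_catSym {α : Type*} {M : Set (List α)} {γ : α}
    (hM : ∀ t ∈ M, γ ∉ t) {s : List α} : s ++ [γ] ∈ pr (catSym M γ) ↔ s ∈ M := by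
  constructor
  · rintro ⟨u, ⟨t, htM, rfl⟩, hpre⟩
    have := concat_prefix_concat_eq hpre (hM t htM)
    exact this ▸ htM
  · intro hs
    exact ⟨s ++ [γ], ⟨s, hs, rfl⟩, List.prefix_refl _⟩

theorem concat_not_mem_pr {α : Type*} {M : Set (List α)} {γ : α}
    (hM : ∀ t ∈ M, γ ∉ t) {s : List α} : s ++ [γ] ∉ pr M := by
  rintro ⟨u, huM, hpre⟩
  exact hM u huM (hpre.sublist.mem (by simp))

theorem concat_mem_prK {α : Type*} {K L : Set (List α)} (hKL : K ⊆ L) {γ : α}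
    (hγ : ∀ t ∈ L, γ ∉ t) {s : List α} :
    s ++ [γ] ∈ pr (catSym K γ ∪ L) ↔ s ∈ K := by
  have hK : ∀ t ∈ K, γ ∉ t := fun t ht => hγ t (hKL ht)
  constructor
  · rintro ⟨u, hu | hu, hpre⟩
    · exact (concat_mem_pr_catSym hK).1 ⟨u, hu, hpre⟩
    · exact absurd ⟨u, hu, hpre⟩ (concat_not_mem_pr hγ)
  · intro hs
    exact ⟨s ++ [γ], Or.inl ⟨s, hs, rfl⟩, List.prefix_refl _⟩

/-- **Theorem 6 (Obs ≤ Con).** With `L' = pr(Lγ)`, `K' = pr(Kγ ∪ L)` and `Sc = {γ}`,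
the observers and fusion rule solve `Obs(f, L, K, (Sio i))` iff, taken as the
controllers and fusion rule for the single controllable event `γ`, they solve
`Con(L', K', (Sio i), {γ})`. -/
theorem obs_to_con {α : Type*} {n : ℕ} {V : Fin n → Type*}
    (f : (∀ i, V i) → Bool) (obs : ∀ i, List α → V i)
    (L K : Set (List α)) (hKL : K ⊆ L)
    (Sio : Fin n → Set α) [∀ i, DecidablePred (· ∈ Sio i)]
    (γ : α) (hγ : ∀ s ∈ L, γ ∉ s) :
    SolvesObs f obs L K Sio ↔
      SolvesCon (fun _ => f) (fun _ => obs)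
        (pr (catSym L γ)) (pr (catSym K γ ∪ L)) Sio {γ} := by
  have hK : ∀ t ∈ K, γ ∉ t := fun t ht => hγ t (hKL ht)
  constructor
  · intro hObs σ hσ s _
    rcases hσ with rfl
    constructor
    · intro h
      have hsK : s ∈ K := (concat_mem_prK hKL hγ).1 h
      exact (hObs s (hKL hsK)).1 hsK
    · rintro ⟨h1, h2⟩
      have hsL : s ∈ L := (concat_mem_pr_catSym hγ).1 h1
      have hsK : s ∉ K := fun hk => h2 ((concat_mem_prK hKL hγ).2 hk)
      exact (hObs s hsL).2 ⟨hsL, hsK⟩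
  · intro hCon s hsL
    have hsK' : s ∈ pr (catSym K γ ∪ L) := ⟨s, Or.inr hsL, List.prefix_refl _⟩
    have := hCon γ rfl s hsK'
    constructor
    · intro hsK
      exact this.1 ((concat_mem_prK hKL hγ).2 hsK)
    · rintro ⟨-, hsK⟩
      exact this.2 ⟨(concat_mem_pr_catSym hγ).2 hsL,
        fun hk => hsK ((concat_mem_prK hKL hγ).1 hk)⟩
end

section
/- Let K ⊆ L be languages over Σ and let γ ∈ Σ be a symbol not occurring in any string of L. Define L' = pr(Lγ) and K' = pr(Kγ ∪ L). Then there exist observers f_1,…,f_n (f_i : Σ* → V_i) and a fusion rule f : V_1 × ⋯ × V_n → Bool solving the observation problem Obs(f, L, K, (Σ_io)) if and only if there exist controllers g_1^γ,…,g_n^γ and a fusion rule g^γ solving the control problem Con(L', K', (Σ_io), {γ}). (Solvability equivalence of observation problems and control problems, Theorem 7.) -/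
open List

/-!
Since `γ` occurs in no string of `L`, the string `s ++ [γ]` lies in `pr (Lγ)` exactly when
`s ∈ L`, and in `pr (Kγ ∪ L)` exactly when `s ∈ K`. Hence enabling `γ` after `s` is legal iff
`s ∈ K` and must be prevented iff `s ∈ L \ K`: the control problem for `γ` is the observation
problem in disguise, and the same local agents and fusion rule solve both.
-/

section PrefixClosure

variable {α : Type*}

theorem mem_pr_of_mem {M : Set (List α)} {s : List α} (hs : s ∈ M) : s ∈ pr M :=
  ⟨s, hs, List.prefix_refl s⟩

theorem concat_notMem_pr {M : Set (List α)} {γ : α} (hγ : ∀ t ∈ M, γ ∉ t) (s : List α) :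
    s ++ [γ] ∉ pr M := by
  rintro ⟨t, ht, hst⟩
  exact hγ t ht (hst.subset (by simp))

theorem concat_mem_pr_catSym_iff {M : Set (List α)} {γ : α} (hγ : ∀ t ∈ M, γ ∉ t)
    {s : List α} : s ++ [γ] ∈ pr (catSym M γ) ↔ s ∈ M := by
  refine ⟨?_, fun hs => mem_pr_of_mem ⟨s, hs, rfl⟩⟩
  rintro ⟨_, ⟨m, hm, rfl⟩, hsm⟩
  -- `s` cannot be shorter than `m`, or `s ++ [γ]` would be a prefix of `m`, which avoids `γ`.
  have hlen : (m ++ [γ]).length ≤ (s ++ [γ]).length := by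
    by_contra! hlt
    have hpre : s ++ [γ] <+: m :=
      List.prefix_of_prefix_length_le hsm (List.prefix_append m [γ]) (by simp at hlt ⊢; omega)
    exact hγ m hm (hpre.subset (by simp))
  rwa [List.append_cancel_right (hsm.sublist.eq_of_length_le hlen)]

theorem concat_mem_pr_catSym_union_iff {K L : Set (List α)} {γ : α} (hKL : K ⊆ L)
    (hγ : ∀ t ∈ L, γ ∉ t) {s : List α} : s ++ [γ] ∈ pr (catSym K γ ∪ L) ↔ s ∈ K := by
  refine ⟨?_, fun hs => mem_pr_of_mem (Or.inl ⟨s, hs, rfl⟩)⟩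
  rintro ⟨t, ht | ht, hst⟩
  · exact (concat_mem_pr_catSym_iff fun k hk => hγ k (hKL hk)).1 ⟨t, ht, hst⟩
  · exact absurd ⟨t, ht, hst⟩ (concat_notMem_pr hγ s)

end PrefixClosure

theorem solvesCon_iff_solvesObs {α : Type*} {n : ℕ} {V : Fin n → Type*}
    {L K : Set (List α)} (hKL : K ⊆ L) {Sio : Fin n → Set α} [∀ i, DecidablePred (· ∈ Sio i)]
    {γ : α} (hγ : ∀ s ∈ L, γ ∉ s) (g : (∀ i, V i) → Bool) (con : ∀ i, List α → V i) :
    SolvesCon (fun _ => g) (fun _ => con) (pr (catSym L γ)) (pr (catSym K γ ∪ L)) Sio {γ} ↔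
      SolvesObs g con L K Sio := by
  simp only [SolvesCon, SolvesObs, Set.mem_singleton_iff, forall_eq, Set.mem_sdiff,
    concat_mem_pr_catSym_iff hγ, concat_mem_pr_catSym_union_iff hKL hγ]
  refine ⟨fun h s hs => h s (mem_pr_of_mem (Or.inr hs)), fun h s _ => ?_⟩
  by_cases hs : s ∈ L
  · exact h s hs
  · exact ⟨fun hsK => absurd (hKL hsK) hs, fun hsL => absurd hsL.1 hs⟩

/-- **Theorem 7 (solvability equivalence of Obs and Con).** With `L' = pr(Lγ)` and
`K' = pr(Kγ ∪ L)`, there exist observers and a fusion rule solving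
`Obs(f, L, K, (Sio i))` iff there exist controllers and a fusion rule solving
`Con(L', K', (Sio i), {γ})`. -/
theorem obs_solvable_iff_con_solvable {α : Type*} {n : ℕ}
    (L K : Set (List α)) (hKL : K ⊆ L)
    (Sio : Fin n → Set α) [∀ i, DecidablePred (· ∈ Sio i)]
    (γ : α) (hγ : ∀ s ∈ L, γ ∉ s) :
    (∃ (V : Fin n → Type) (f : (∀ i, V i) → Bool) (obs : ∀ i, List α → V i),
        SolvesObs f obs L K Sio) ↔
      (∃ (W : Fin n → Type) (g : (∀ i, W i) → Bool) (con : ∀ i, List α → W i),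
        SolvesCon (fun _ => g) (fun _ => con)
          (pr (catSym L γ)) (pr (catSym K γ ∪ L)) Sio {γ}) := by
  simp only [solvesCon_iff_solvesObs hKL hγ]
end
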